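/- Let ℓ ≥ 2 be an integer and p, q, ν ∈ ℝ satisfying the quadratic equation (q+2)ν² − (ℓ² − ℓ(p+q+4) − 1)ν + p + 2 = 0. Set b = q+p−2ℓ+4 and define the polynomial y₂(u) = (ℓ−1)·P_{ℓ−1}^{(b, −p−2)}(2u−1) + (ν+1)·P_{ℓ−2}^{(b, −p−1)}(2u−1). Then y₂ satisfies the differential equation u(u−1)(u−ν)·y₂″(u) + ((u(q−2ℓ+5)+p)(u−ν) + u(1−u))·y₂′(u) + ((ℓ−1)(ℓ−2−q)(u−ν) + νℓ + 1)·y₂(u) = 0, as an identity of polynomials in u. -/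
import Mathlib


noncomputable section

open Polynomial Finset

/-- Generalized binomial coefficient `C(r, m) = r(r−1)⋯(r−m+1)/m!` for real `r`. -/
def gchoose (r : ℝ) (m : ℕ) : ℝ := (∏ i ∈ Finset.range m, (r - i)) / (Nat.factorial m)

/-- The Jacobi polynomial
`P_n^{(α,β)}(x) = Σ_{k=0}^{n} C(n+α, n−k)·C(n+β, k)·((x−1)/2)^k·((x+1)/2)^{n−k}`. -/
def jacobiP (n : ℕ) (a b : ℝ) : Polynomial ℝ :=
  ∑ k ∈ Finset.range (n + 1),
    Polynomial.C (gchoose (a + n) (n - k) * gchoose (b + n) k)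
      * (Polynomial.C (1 / 2 : ℝ) * (Polynomial.X - 1)) ^ k
      * (Polynomial.C (1 / 2 : ℝ) * (Polynomial.X + 1)) ^ (n - k)


lemma gchoose_zero (r : ℝ) : gchoose r 0 = 1 := by simp [gchoose]

lemma gchoose_succ_mul (r : ℝ) (m : ℕ) :
    gchoose r (m + 1) * (m + 1) = gchoose r m * (r - m) := by
  have h1 : ((Nat.factorial m : ℝ)) ≠ 0 := by exact_mod_cast (Nat.factorial_ne_zero m)
  have h2 : ((m : ℝ) + 1) ≠ 0 := by positivity
  simp only [gchoose, Finset.prod_range_succ, Nat.factorial_succ]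
  push_cast
  field_simp

lemma gchoose_succ_mul' (r : ℝ) (m : ℕ) :
    gchoose (r + 1) (m + 1) * (m + 1) = gchoose r m * (r + 1) := by
  have h1 : ((Nat.factorial m : ℝ)) ≠ 0 := by exact_mod_cast (Nat.factorial_ne_zero m)
  have h2 : ((m : ℝ) + 1) ≠ 0 := by positivity
  have hp : ∏ i ∈ Finset.range (m+1), (r + 1 - i) = (r+1) * ∏ i ∈ Finset.range m, (r - i) := by
    rw [Finset.prod_range_succ']
    rw [Finset.prod_congr rfl (fun i (_ : i ∈ Finset.range m) => by
      push_cast; ring : ∀ i ∈ Finset.range m, (r + 1 - ((i:ℕ)+1 : ℕ)) = r - i)]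
    push_cast
    ring
  simp only [gchoose, hp, Nat.factorial_succ]
  push_cast
  field_simp

lemma gchoose_add (x y : ℝ) : ∀ j : ℕ,
    gchoose (x + y) j = ∑ t ∈ Finset.range (j + 1), gchoose x t * gchoose y (j - t) := by
  intro j
  induction j with
  | zero => simp [gchoose_zero]
  | succ j ih =>
    have hj1 : ((j : ℝ) + 1) ≠ 0 := by positivity
    have key : gchoose (x + y) (j+1) * (j+1) =
        (∑ t ∈ Finset.range (j + 2), gchoose x t * gchoose y (j + 1 - t)) * (j+1) := by
      rw [gchoose_succ_mul, ih, Finset.sum_mul, Finset.sum_mul]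
      have hsplit : ∀ t ∈ Finset.range (j+1),
          gchoose x t * gchoose y (j - t) * (x + y - j)
          = gchoose x (t+1) * (t+1) * gchoose y (j - t)
            + gchoose x t * (gchoose y (j - t + 1) * ((j:ℝ) - t + 1)) := by
        intro t ht
        rw [Finset.mem_range] at ht
        have hc : ((j:ℝ) - (t:ℝ)) = ((j - t : ℕ) : ℝ) := by
          rw [Nat.cast_sub (by omega)]
        rw [hc, gchoose_succ_mul x t, gchoose_succ_mul y (j - t), ← hc]
        ring
      rw [Finset.sum_congr rfl hsplit, Finset.sum_add_distrib]
      have hR : ∀ u ∈ Finset.range (j+2),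
          gchoose x u * gchoose y (j + 1 - u) * ((j:ℝ)+1)
          = gchoose x u * gchoose y (j + 1 - u) * u
            + gchoose x u * gchoose y (j + 1 - u) * ((j + 1 - u : ℕ) : ℝ) := by
        intro u hu
        rw [Finset.mem_range] at hu
        have : ((j + 1 - u : ℕ) : ℝ) = (j:ℝ) + 1 - u := by
          rw [Nat.cast_sub (by omega)]; push_cast; ring
        rw [this]; ring
      rw [Finset.sum_congr rfl hR, Finset.sum_add_distrib]
      congr 1
      · rw [Finset.sum_range_succ' (fun u => gchoose x u * gchoose y (j + 1 - u) * (u:ℝ)) (j+1)]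
        simp only [Nat.cast_zero, mul_zero, add_zero, Nat.succ_sub_succ]
        exact Finset.sum_congr rfl (fun t ht => by push_cast; ring)
      · rw [Finset.sum_range_succ (fun u => gchoose x u * gchoose y (j + 1 - u) * ((j + 1 - u : ℕ):ℝ)) (j+1)]
        simp only [Nat.sub_self, Nat.cast_zero, mul_zero, add_zero]
        refine Finset.sum_congr rfl (fun t ht => ?_)
        rw [Finset.mem_range] at ht
        have h1 : j + 1 - t = (j - t) + 1 := by omega
        rw [h1]
        push_cast [Nat.cast_sub (show t ≤ j by omega)]
        ring
    exact mul_right_cancel₀ hj1 key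

lemma gchoose_mul_choose (r : ℝ) (n k : ℕ) (hkn : k ≤ n) :
    gchoose r n * (Nat.choose n k) = gchoose r k * gchoose (r - k) (n - k) := by
  have h0 : n = k + (n - k) := by omega
  have hsplit : ∏ i ∈ Finset.range n, (r - i)
      = (∏ i ∈ Finset.range k, (r - i)) * ∏ i ∈ Finset.range (n - k), (r - k - i) := by
    nth_rewrite 1 [h0]
    rw [Finset.prod_range_add]
    congr 1
    exact Finset.prod_congr rfl (fun i _ => by push_cast; ring)
  have hf : (Nat.choose n k : ℝ) * (Nat.factorial k) * (Nat.factorial (n - k)) = Nat.factorial n := by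
    exact_mod_cast congrArg (Nat.cast : ℕ → ℝ) (Nat.choose_mul_factorial_mul_factorial hkn)
  have h1 : ((Nat.factorial n : ℝ)) ≠ 0 := by exact_mod_cast (Nat.factorial_ne_zero n)
  have h2 : ((Nat.factorial k : ℝ)) ≠ 0 := by exact_mod_cast (Nat.factorial_ne_zero k)
  have h3 : ((Nat.factorial (n-k) : ℝ)) ≠ 0 := by exact_mod_cast (Nat.factorial_ne_zero (n-k))
  simp only [gchoose, hsplit]
  field_simp
  rw [← hf]
  ring

lemma jac_comp (n : ℕ) (a b : ℝ) :
    (jacobiP n a b).comp (2*X - 1) =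
    ∑ k ∈ Finset.range (n+1), C (gchoose (a+n) (n-k) * gchoose (b+n) k)
      * (X + C (-1:ℝ))^k * X^(n-k) := by
  have h2 : (C (1/2:ℝ)) * 2 = 1 := by
    rw [show (2:ℝ[X]) = C 2 from (map_ofNat C 2).symm, ← map_mul]
    norm_num
  have e1 : C (1/2:ℝ) * (2*X - 1 - 1) = X + C (-1:ℝ) := by
    simp only [map_neg, map_one]
    linear_combination (X - 1) * h2
  have e2 : C (1/2:ℝ) * (2*X - 1 + 1) = X := by
    linear_combination X * h2
  rw [jacobiP]
  rw [show ∀ (f : ℕ → ℝ[X]) (s : Finset ℕ), (∑ k ∈ s, f k).comp (2*X-1) = ∑ k ∈ s, (f k).comp (2*X-1)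
    from fun f s => map_sum (Polynomial.compRingHom (2*X-1)) f s]
  refine Finset.sum_congr rfl fun k _ => ?_
  simp only [mul_comp, pow_comp, C_comp, X_comp, sub_comp, add_comp, one_comp]
  rw [e1, e2]

lemma jac_coeff (n : ℕ) (a b : ℝ) (j : ℕ) (hj : j ≤ n) :
    ((jacobiP n a b).comp (2*X-1)).coeff j
      = (-1:ℝ)^(n-j) * (gchoose (b+n) (n-j) * gchoose (a+b+n+j) j) := by
  rw [jac_comp, Polynomial.finset_sum_coeff]
  have hterm : ∀ k, (C (gchoose (a+n) (n-k) * gchoose (b+n) k) * (X + C (-1:ℝ))^k * X^(n-k)).coeff j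
      = if n-k ≤ j then (gchoose (a+n) (n-k) * gchoose (b+n) k)
          * ((-1:ℝ)^(k-(j-(n-k))) * (Nat.choose k (j-(n-k)))) else 0 := by
    intro k
    rw [Polynomial.coeff_mul_X_pow']
    split_ifs with h
    · rw [Polynomial.coeff_C_mul, Polynomial.coeff_X_add_C_pow]
    · rfl
  rw [Finset.sum_congr rfl fun k _ => hterm k]
  rw [show n + 1 = (n-j) + (j+1) by omega, Finset.sum_range_add]
  have hz : ∑ k ∈ Finset.range (n-j), (if n-k ≤ j then (gchoose (a+n) (n-k) * gchoose (b+n) k)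
          * ((-1:ℝ)^(k-(j-(n-k))) * (Nat.choose k (j-(n-k)))) else 0) = 0 := by
    refine Finset.sum_eq_zero fun k hk => ?_
    rw [Finset.mem_range] at hk
    rw [if_neg (by omega)]
  rw [hz, zero_add]
  have hmain : ∀ t ∈ Finset.range (j+1),
      (if n-(n-j+t) ≤ j then (gchoose (a+n) (n-(n-j+t)) * gchoose (b+n) (n-j+t))
          * ((-1:ℝ)^((n-j+t)-(j-(n-(n-j+t)))) * (Nat.choose (n-j+t) (j-(n-(n-j+t))))) else 0)
      = (-1:ℝ)^(n-j) * (gchoose (b+n) (n-j) * (gchoose ((b+n) - (n-j : ℕ)) t * gchoose (a+n) (j-t))) := by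
    intro t ht
    rw [Finset.mem_range] at ht
    have h1 : n-(n-j+t) = j-t := by omega
    have h2 : j-(j-t) = t := by omega
    have h3 : (n-j+t)-t = n-j := by omega
    rw [if_pos (by omega), h1, h2, h3]
    have h4 : (Nat.choose (n-j+t) t : ℝ) = Nat.choose (n-j+t) (n-j) := by
      rw [← Nat.choose_symm (Nat.le_add_left t (n-j)), show n-j+t-t = n-j by omega]
    rw [h4]
    have h5 := gchoose_mul_choose (b+n) (n-j+t) (n-j) (Nat.le_add_right _ _)
    rw [show (n-j+t)-(n-j) = t by omega] at h5
    calc gchoose (a+n) (j-t) * gchoose (b+n) (n-j+t) * ((-1:ℝ)^(n-j) * (Nat.choose (n-j+t) (n-j)))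
        = (-1:ℝ)^(n-j) * ((gchoose (b+n) (n-j+t) * (Nat.choose (n-j+t) (n-j))) * gchoose (a+n) (j-t)) := by ring
      _ = (-1:ℝ)^(n-j) * ((gchoose (b+n) (n-j) * gchoose ((b+n) - (n-j:ℕ)) t) * gchoose (a+n) (j-t)) := by rw [h5]
      _ = _ := by ring
  rw [Finset.sum_congr rfl hmain, ← Finset.mul_sum, ← Finset.mul_sum, ← gchoose_add]
  have : (b+n) - ((n-j : ℕ):ℝ) + (a+n) = a+b+n+j := by
    rw [Nat.cast_sub hj]
    push_cast
    ring
  rw [this]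

lemma jac_coeff_zero (n : ℕ) (a b : ℝ) (j : ℕ) (hj : n < j) :
    ((jacobiP n a b).comp (2*X-1)).coeff j = 0 := by
  rw [jac_comp, Polynomial.finset_sum_coeff]
  refine Finset.sum_eq_zero fun k hk => ?_
  rw [Finset.mem_range] at hk
  rw [Polynomial.coeff_mul_X_pow', if_pos (by omega), Polynomial.coeff_C_mul,
    Polynomial.coeff_X_add_C_pow, Nat.choose_eq_zero_of_lt (by omega)]
  simp


lemma keyA (p q ν J W g0 g1 g2 g3 h0 h1 h2 : ℝ)
    (hW1 : W + 1 ≠ 0)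
    (hW2 : W + 2 ≠ 0)
    (hW3 : W + 3 ≠ 0)
    (hJ1 : J + 1 ≠ 0)
    (hJ2 : J + 2 ≠ 0)
    (hν : (q+2)*ν^2 - ((J+W+4)^2 - (J+W+4)*(p+q+4) - 1)*ν + p + 2 = 0)
    (hg1 : g1*(W+1) = g0*(J+1-p))
    (hg2 : g2*(W+2) = g1*(J-p))
    (hg3 : g3*(W+3) = g2*(J-1-p))
    (hh1 : h1*(J+1) = h0*(q-W-2))
    (hh2 : h2*(J+2) = h1*(q-W-1)) :
    (-(W+3))*(q-W-2)*((J+W+3)*g3-(ν+1)*g2)*h0 - (-(1+ν)*(J+1)*J + (p+1-ν*(q-2*(J+W+2)+1))*(J+1) + (-ν*(J+W+3)*(J+W+2-q)+ν*(J+W+4)+1))*((J+W+3)*g2-(ν+1)*g1)*h1 + ν*(J+2)*(J+1-p)*((J+W+3)*g1-(ν+1)*g0)*h2 = 0 := by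
  have hKne : ((W+1)*(W+2)*(W+3)*(J+1)*(J+2)) ≠ 0 := mul_ne_zero (mul_ne_zero (mul_ne_zero (mul_ne_zero hW1 hW2) hW3) hJ1) hJ2
  have h : ((-(W+3))*(q-W-2)*((J+W+3)*g3-(ν+1)*g2)*h0 - (-(1+ν)*(J+1)*J + (p+1-ν*(q-2*(J+W+2)+1))*(J+1) + (-ν*(J+W+3)*(J+W+2-q)+ν*(J+W+4)+1))*((J+W+3)*g2-(ν+1)*g1)*h1 + ν*(J+2)*(J+1-p)*((J+W+3)*g1-(ν+1)*g0)*h2) * ((W+1)*(W+2)*(W+3)*(J+1)*(J+2)) = 0 := by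
    linear_combination (72*h0 + 192*W*h0 + 194*W^2*h0 + 94*W^3*h0 + 22*W^4*h0 + 2*W^5*h0 + 132*J*h0 + 344*J*W*h0 + 337*J*W^2*h0 + 157*J*W^3*h0 + 35*J*W^4*h0 + 3*J*W^5*h0 + 72*J^2*h0 + 180*J^2*W*h0 + 166*J^2*W^2*h0 + 71*J^2*W^3*h0 + 14*J^2*W^4*h0 + 1*J^2*W^5*h0 + 12*J^3*h0 + 28*J^3*W*h0 + 23*J^3*W^2*h0 + 8*J^3*W^3*h0 + 1*J^3*W^4*h0 - 36*q*h0 - 78*q*W*h0 - 58*q*W^2*h0 - 18*q*W^3*h0 - 2*q*W^4*h0 - 66*q*J*h0 - 139*q*J*W*h0 - 99*q*J*W^2*h0 - 29*q*J*W^3*h0 - 3*q*J*W^4*h0 - 36*q*J^2*h0 - 72*q*J^2*W*h0 - 47*q*J^2*W^2*h0 - 12*q*J^2*W^3*h0 - 1*q*J^2*W^4*h0 - 6*q*J^3*h0 - 11*q*J^3*W*h0 - 6*q*J^3*W^2*h0 - 1*q*J^3*W^3*h0) * hg3 + (-36*h1 - 72*h0 - 60*W*h1 - 156*W*h0 - 28*W^2*h1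 - 116*W^2*h0 - 4*W^3*h1 - 36*W^3*h0 - 4*W^4*h0 - 66*J*h1 - 84*J*h0 - 106*J*W*h1 - 178*J*W*h0 - 46*J*W^2*h1 - 128*J*W^2*h0 - 6*J*W^3*h1 - 38*J*W^3*h0 - 4*J*W^4*h0 - 18*J^2*h1 + 12*J^2*h0 - 24*J^2*W*h1 + 28*J^2*W*h0 - 6*J^2*W^2*h1 + 23*J^2*W^2*h0 + 8*J^2*W^3*h0 + 1*J^2*W^4*h0 + 27*J^3*h1 + 30*J^3*h0 + 45*J^3*W*h1 + 61*J^3*W*h0 + 21*J^3*W^2*h1 + 41*J^3*W^2*h0 + 3*J^3*W^3*h1 + 11*J^3*W^3*h0 + 1*J^3*W^4*h0 + 18*J^4*h1 + 6*J^4*h0 + 27*J^4*W*h1 + 11*J^4*W*h0 + 10*J^4*W^2*h1 + 6*J^4*W^2*h0 + 1*J^4*W^3*h1 + 1*J^4*W^3*h0 + 3*J^5*h1 + 4*J^5*W*h1 + 1*J^5*W^2*h1 - 18*ν*h1 - 36*ν*h0 + 6*ν*W*h1 - 78*ν*W*h0 + 64*ν*W^2*h1 - 58*ν*W^2*h0 +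 56*ν*W^3*h1 - 18*ν*W^3*h0 + 18*ν*W^4*h1 - 2*ν*W^4*h0 + 2*ν*W^5*h1 - 33*ν*J*h1 - 54*ν*J*h0 + 13*ν*J*W*h1 - 117*ν*J*W*h0 + 116*ν*J*W^2*h1 - 87*ν*J*W^2*h0 + 96*ν*J*W^3*h1 - 27*ν*J*W^3*h0 + 29*ν*J*W^4*h1 - 3*ν*J*W^4*h0 + 3*ν*J*W^5*h1 - 18*ν*J^2*h1 - 18*ν*J^2*h0 + 9*ν*J^2*W*h1 - 39*ν*J^2*W*h0 + 62*ν*J^2*W^2*h1 - 29*ν*J^2*W^2*h0 + 46*ν*J^2*W^3*h1 - 9*ν*J^2*W^3*h0 + 12*ν*J^2*W^4*h1 - 1*ν*J^2*W^4*h0 + 1*ν*J^2*W^5*h1 - 3*ν*J^3*h1 + 2*ν*J^3*W*h1 + 10*ν*J^3*W^2*h1 + 6*ν*J^3*W^3*h1 + 1*ν*J^3*W^4*h1 + 36*q*h0 + 60*q*W*h0 + 28*q*W^2*h0 + 4*q*W^3*h0 + 42*q*J*h0 + 68*q*J*W*h0 + 30*q*J*W^2*h0 + 4*q*J*W^3*h0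 - 6*q*J^2*h0 - 11*q*J^2*W*h0 - 6*q*J^2*W^2*h0 - 1*q*J^2*W^3*h0 - 15*q*J^3*h0 - 23*q*J^3*W*h0 - 9*q*J^3*W^2*h0 - 1*q*J^3*W^3*h0 - 3*q*J^4*h0 - 4*q*J^4*W*h0 - 1*q*J^4*W^2*h0 - 36*q*ν*h1 + 18*q*ν*h0 - 78*q*ν*W*h1 + 30*q*ν*W*h0 - 58*q*ν*W^2*h1 + 14*q*ν*W^2*h0 - 18*q*ν*W^3*h1 + 2*q*ν*W^3*h0 - 2*q*ν*W^4*h1 - 66*q*ν*J*h1 + 27*q*ν*J*h0 - 139*q*ν*J*W*h1 + 45*q*ν*J*W*h0 - 99*q*ν*J*W^2*h1 + 21*q*ν*J*W^2*h0 - 29*q*ν*J*W^3*h1 + 3*q*ν*J*W^3*h0 - 3*q*ν*J*W^4*h1 - 36*q*ν*J^2*h1 + 9*q*ν*J^2*h0 - 72*q*ν*J^2*W*h1 + 15*q*ν*J^2*W*h0 - 47*q*ν*J^2*W^2*h1 + 7*q*ν*J^2*W^2*h0 - 12*q*ν*J^2*W^3*h1 + 1*q*ν*J^2*W^3*h0 -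 1*q*ν*J^2*W^4*h1 - 6*q*ν*J^3*h1 - 11*q*ν*J^3*W*h1 - 6*q*ν*J^3*W^2*h1 - 1*q*ν*J^3*W^3*h1 - 18*p*h1 - 36*p*h0 - 30*p*W*h1 - 78*p*W*h0 - 14*p*W^2*h1 - 58*p*W^2*h0 - 2*p*W^3*h1 - 18*p*W^3*h0 - 2*p*W^4*h0 - 51*p*J*h1 - 66*p*J*h0 - 83*p*J*W*h1 - 139*p*J*W*h0 - 37*p*J*W^2*h1 - 99*p*J*W^2*h0 - 5*p*J*W^3*h1 - 29*p*J*W^3*h0 - 3*p*J*W^4*h0 - 51*p*J^2*h1 - 36*p*J^2*h0 - 80*p*J^2*W*h1 - 72*p*J^2*W*h0 - 33*p*J^2*W^2*h1 - 47*p*J^2*W^2*h0 - 4*p*J^2*W^3*h1 - 12*p*J^2*W^3*h0 - 1*p*J^2*W^4*h0 - 21*p*J^3*h1 - 6*p*J^3*h0 - 31*p*J^3*W*h1 - 11*p*J^3*W*h0 - 11*p*J^3*W^2*h1 - 6*p*J^3*W^2*h0 - 1*p*J^3*W^3*h1 - 1*p*J^3*W^3*h0 - 3*p*J^4*h1 -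 4*p*J^4*W*h1 - 1*p*J^4*W^2*h1 + 18*p*q*h0 + 30*p*q*W*h0 + 14*p*q*W^2*h0 + 2*p*q*W^3*h0 + 33*p*q*J*h0 + 53*p*q*J*W*h0 + 23*p*q*J*W^2*h0 + 3*p*q*J*W^3*h0 + 18*p*q*J^2*h0 + 27*p*q*J^2*W*h0 + 10*p*q*J^2*W^2*h0 + 1*p*q*J^2*W^3*h0 + 3*p*q*J^3*h0 + 4*p*q*J^3*W*h0 + 1*p*q*J^3*W^2*h0) * hg2 + (24*h1 + 20*W*h1 + 4*W^2*h1 - 72*J*h0 + 6*J*W*h1 - 84*J*W*h0 + 2*J*W^2*h1 - 32*J*W^2*h0 - 4*J*W^3*h0 - 66*J^2*h1 - 84*J^2*h0 - 40*J^2*W*h1 - 94*J^2*W*h0 - 6*J^2*W^2*h1 - 34*J^2*W^2*h0 - 4*J^2*W^3*h0 - 36*J^3*h1 + 12*J^3*h0 - 21*J^3*W*h1 + 16*J^3*W*h0 - 3*J^3*W^2*h1 + 7*J^3*W^2*h0 + 1*J^3*W^3*h0 + 21*J^4*h1 + 30*J^4*h0 + 13*J^4*W*h1 + 31*J^4*W*h0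 + 2*J^4*W^2*h1 + 10*J^4*W^2*h0 + 1*J^4*W^3*h0 + 18*J^5*h1 + 6*J^5*h0 + 9*J^5*W*h1 + 5*J^5*W*h0 + 1*J^5*W^2*h1 + 1*J^5*W^2*h0 + 3*J^6*h1 + 1*J^6*W*h1 + 72*ν*h2 + 36*ν*h1 + 84*ν*W*h2 + 6*ν*W*h1 + 32*ν*W^2*h2 - 26*ν*W^2*h1 + 4*ν*W^3*h2 - 14*ν*W^3*h1 - 2*ν*W^4*h1 + 240*ν*J*h2 + 36*ν*J*h1 - 36*ν*J*h0 + 272*ν*J*W*h2 + 33*ν*J*W*h1 - 42*ν*J*W*h0 + 100*ν*J*W^2*h2 + 1*ν*J*W^2*h1 - 16*ν*J*W^2*h0 + 12*ν*J*W^3*h2 - 5*ν*J*W^3*h1 - 2*ν*J*W^3*h0 - 1*ν*J*W^4*h1 + 306*ν*J^2*h2 - 27*ν*J^2*h1 - 54*ν*J^2*h0 + 333*ν*J^2*W*h2 + 39*ν*J^2*W*h1 - 63*ν*J^2*W*h0 + 116*ν*J^2*W^2*h2 + 55*ν*J^2*W^2*h1 - 24*ν*J^2*W^2*h0 + 13*ν*J^2*W^3*h2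 + 19*ν*J^2*W^3*h1 - 3*ν*J^2*W^3*h0 + 2*ν*J^2*W^4*h1 + 186*ν*J^3*h2 - 36*ν*J^3*h1 - 18*ν*J^3*h0 + 191*ν*J^3*W*h2 + 12*ν*J^3*W*h1 - 21*ν*J^3*W*h0 + 61*ν*J^3*W^2*h2 + 32*ν*J^3*W^2*h1 - 8*ν*J^3*W^2*h0 + 6*ν*J^3*W^3*h2 + 11*ν*J^3*W^3*h1 - 1*ν*J^3*W^3*h0 + 1*ν*J^3*W^4*h1 + 54*ν*J^4*h2 - 9*ν*J^4*h1 + 51*ν*J^4*W*h2 + 14*ν*J^4*W^2*h2 + 4*ν*J^4*W^2*h1 + 1*ν*J^4*W^3*h2 + 1*ν*J^4*W^3*h1 + 6*ν*J^5*h2 + 5*ν*J^5*W*h2 + 1*ν*J^5*W^2*h2 + 12*ν^2*h1 - 14*ν^2*W*h1 - 30*ν^2*W^2*h1 - 14*ν^2*W^3*h1 - 2*ν^2*W^4*h1 + 18*ν^2*J*h1 - 21*ν^2*J*W*h1 - 45*ν^2*J*W^2*h1 - 21*ν^2*J*W^3*h1 - 3*ν^2*J*W^4*h1 + 6*ν^2*J^2*h1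 - 7*ν^2*J^2*W*h1 - 15*ν^2*J^2*W^2*h1 - 7*ν^2*J^2*W^3*h1 - 1*ν^2*J^2*W^4*h1 + 36*q*J*h0 + 24*q*J*W*h0 + 4*q*J*W^2*h0 + 42*q*J^2*h0 + 26*q*J^2*W*h0 + 4*q*J^2*W^2*h0 - 6*q*J^3*h0 - 5*q*J^3*W*h0 - 1*q*J^3*W^2*h0 - 15*q*J^4*h0 - 8*q*J^4*W*h0 - 1*q*J^4*W^2*h0 - 3*q*J^5*h0 - 1*q*J^5*W*h0 + 24*q*ν*h1 + 32*q*ν*W*h1 + 14*q*ν*W^2*h1 + 2*q*ν*W^3*h1 + 18*q*ν*J*h0 + 6*q*ν*J*W*h1 + 12*q*ν*J*W*h0 + 5*q*ν*J*W^2*h1 + 2*q*ν*J*W^2*h0 + 1*q*ν*J*W^3*h1 - 54*q*ν*J^2*h1 + 27*q*ν*J^2*h0 - 57*q*ν*J^2*W*h1 + 18*q*ν*J^2*W*h0 - 19*q*ν*J^2*W^2*h1 + 3*q*ν*J^2*W^2*h0 - 2*q*ν*J^2*W^3*h1 - 36*q*ν*J^3*h1 + 9*q*ν*J^3*h0 -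 36*q*ν*J^3*W*h1 + 6*q*ν*J^3*W*h0 - 11*q*ν*J^3*W^2*h1 + 1*q*ν*J^3*W^2*h0 - 1*q*ν*J^3*W^3*h1 - 6*q*ν*J^4*h1 - 5*q*ν*J^4*W*h1 - 1*q*ν*J^4*W^2*h1 + 24*q*ν^2*h1 + 32*q*ν^2*W*h1 + 14*q*ν^2*W^2*h1 + 2*q*ν^2*W^3*h1 + 36*q*ν^2*J*h1 + 48*q*ν^2*J*W*h1 + 21*q*ν^2*J*W^2*h1 + 3*q*ν^2*J*W^3*h1 + 12*q*ν^2*J^2*h1 + 16*q*ν^2*J^2*W*h1 + 7*q*ν^2*J^2*W^2*h1 + 1*q*ν^2*J^2*W^3*h1 + 48*p*h1 + 72*p*h0 + 34*p*W*h1 + 84*p*W*h0 + 6*p*W^2*h1 + 32*p*W^2*h0 + 4*p*W^3*h0 + 78*p*J*h1 + 48*p*J*h0 + 53*p*J*W*h1 + 52*p*J*W*h0 + 9*p*J*W^2*h1 + 18*p*J*W^2*h0 + 2*p*J*W^3*h0 - 9*p*J^2*h1 - 78*p*J^2*h0 - 6*p*J^2*W*h1 - 89*p*J^2*W*h0 -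 1*p*J^2*W^2*h1 - 33*p*J^2*W^2*h0 - 4*p*J^2*W^3*h0 - 72*p*J^3*h1 - 66*p*J^3*h0 - 42*p*J^3*W*h1 - 67*p*J^3*W*h0 - 6*p*J^3*W^2*h1 - 21*p*J^3*W^2*h0 - 2*p*J^3*W^3*h0 - 39*p*J^4*h1 - 12*p*J^4*h0 - 19*p*J^4*W*h1 - 10*p*J^4*W*h0 - 2*p*J^4*W^2*h1 - 2*p*J^4*W^2*h0 - 6*p*J^5*h1 - 2*p*J^5*W*h1 - 72*p*ν*h2 + 30*p*ν*h1 + 36*p*ν*h0 - 84*p*ν*W*h2 - 14*p*ν*W*h1 + 42*p*ν*W*h0 - 32*p*ν*W^2*h2 - 38*p*ν*W^2*h1 + 16*p*ν*W^2*h0 - 4*p*ν*W^3*h2 - 16*p*ν*W^3*h1 + 2*p*ν*W^3*h0 - 2*p*ν*W^4*h1 - 168*p*ν*J*h2 + 63*p*ν*J*h1 + 54*p*ν*J*h0 - 188*p*ν*J*W*h2 - 21*p*ν*J*W*h1 + 63*p*ν*J*W*h0 - 68*p*ν*J*W^2*h2 - 65*p*ν*J*W^2*h1 + 24*p*ν*J*W^2*h0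 - 8*p*ν*J*W^3*h2 - 26*p*ν*J*W^3*h1 + 3*p*ν*J*W^3*h0 - 3*p*ν*J*W^4*h1 - 138*p*ν*J^2*h2 + 42*p*ν*J^2*h1 + 18*p*ν*J^2*h0 - 145*p*ν*J^2*W*h2 - 7*p*ν*J^2*W*h1 + 21*p*ν*J^2*W*h0 - 48*p*ν*J^2*W^2*h2 - 31*p*ν*J^2*W^2*h1 + 8*p*ν*J^2*W^2*h0 - 5*p*ν*J^2*W^3*h2 - 11*p*ν*J^2*W^3*h1 + 1*p*ν*J^2*W^3*h0 - 1*p*ν*J^2*W^4*h1 - 48*p*ν*J^3*h2 + 9*p*ν*J^3*h1 - 46*p*ν*J^3*W*h2 - 13*p*ν*J^3*W^2*h2 - 4*p*ν*J^3*W^2*h1 - 1*p*ν*J^3*W^3*h2 - 1*p*ν*J^3*W^3*h1 - 6*p*ν*J^4*h2 - 5*p*ν*J^4*W*h2 - 1*p*ν*J^4*W^2*h2 - 36*p*q*h0 - 24*p*q*W*h0 - 4*p*q*W^2*h0 - 24*p*q*J*h0 - 14*p*q*J*W*h0 - 2*p*q*J*W^2*h0 + 39*p*q*J^2*h0 + 25*p*q*J^2*W*h0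 + 4*p*q*J^2*W^2*h0 + 33*p*q*J^3*h0 + 17*p*q*J^3*W*h0 + 2*p*q*J^3*W^2*h0 + 6*p*q*J^4*h0 + 2*p*q*J^4*W*h0 + 36*p*q*ν*h1 - 18*p*q*ν*h0 + 42*p*q*ν*W*h1 - 12*p*q*ν*W*h0 + 16*p*q*ν*W^2*h1 - 2*p*q*ν*W^2*h0 + 2*p*q*ν*W^3*h1 + 66*p*q*ν*J*h1 - 27*p*q*ν*J*h0 + 73*p*q*ν*J*W*h1 - 18*p*q*ν*J*W*h0 + 26*p*q*ν*J*W^2*h1 - 3*p*q*ν*J*W^2*h0 + 3*p*q*ν*J*W^3*h1 + 36*p*q*ν*J^2*h1 - 9*p*q*ν*J^2*h0 + 36*p*q*ν*J^2*W*h1 - 6*p*q*ν*J^2*W*h0 + 11*p*q*ν*J^2*W^2*h1 - 1*p*q*ν*J^2*W^2*h0 + 1*p*q*ν*J^2*W^3*h1 + 6*p*q*ν*J^3*h1 + 5*p*q*ν*J^3*W*h1 + 1*p*q*ν*J^3*W^2*h1 + 18*p^2*h1 + 36*p^2*h0 + 12*p^2*W*h1 + 42*p^2*W*h0 + 2*p^2*W^2*h1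 + 16*p^2*W^2*h0 + 2*p^2*W^3*h0 + 51*p^2*J*h1 + 66*p^2*J*h0 + 32*p^2*J*W*h1 + 73*p^2*J*W*h0 + 5*p^2*J*W^2*h1 + 26*p^2*J*W^2*h0 + 3*p^2*J*W^3*h0 + 51*p^2*J^2*h1 + 36*p^2*J^2*h0 + 29*p^2*J^2*W*h1 + 36*p^2*J^2*W*h0 + 4*p^2*J^2*W^2*h1 + 11*p^2*J^2*W^2*h0 + 1*p^2*J^2*W^3*h0 + 21*p^2*J^3*h1 + 6*p^2*J^3*h0 + 10*p^2*J^3*W*h1 + 5*p^2*J^3*W*h0 + 1*p^2*J^3*W^2*h1 + 1*p^2*J^3*W^2*h0 + 3*p^2*J^4*h1 + 1*p^2*J^4*W*h1 - 18*p^2*q*h0 - 12*p^2*q*W*h0 - 2*p^2*q*W^2*h0 - 33*p^2*q*J*h0 - 20*p^2*q*J*W*h0 - 3*p^2*q*J*W^2*h0 - 18*p^2*q*J^2*h0 - 9*p^2*q*J^2*W*h0 - 1*p^2*q*J^2*W^2*h0 - 3*p^2*q*J^3*h0 - 1*p^2*q*J^3*W*h0) * hg1 + (24*ν*g0 + 20*ν*W*g0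 + 4*ν*W^2*g0 + 108*ν*J*g0 + 102*ν*J*W*g0 + 28*ν*J*W^2*g0 + 2*ν*J*W^3*g0 + 180*ν*J^2*g0 + 180*ν*J^2*W*g0 + 55*ν*J^2*W^2*g0 + 5*ν*J^2*W^3*g0 + 138*ν*J^3*g0 + 139*ν*J^3*W*g0 + 43*ν*J^3*W^2*g0 + 4*ν*J^3*W^3*g0 + 48*ν*J^4*g0 + 46*ν*J^4*W*g0 + 13*ν*J^4*W^2*g0 + 1*ν*J^4*W^3*g0 + 6*ν*J^5*g0 + 5*ν*J^5*W*g0 + 1*ν*J^5*W^2*g0 - 12*ν^2*g0 - 22*ν^2*W*g0 - 12*ν^2*W^2*g0 - 2*ν^2*W^3*g0 - 30*ν^2*J*g0 - 55*ν^2*J*W*g0 - 30*ν^2*J*W^2*g0 - 5*ν^2*J*W^3*g0 - 24*ν^2*J^2*g0 - 44*ν^2*J^2*W*g0 - 24*ν^2*J^2*W^2*g0 - 4*ν^2*J^2*W^3*g0 - 6*ν^2*J^3*g0 - 11*ν^2*J^3*W*g0 - 6*ν^2*J^3*W^2*g0 - 1*ν^2*J^3*W^3*g0 - 60*p*ν*g0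 - 62*p*ν*W*g0 - 20*p*ν*W^2*g0 - 2*p*ν*W^3*g0 - 186*p*ν*J*g0 - 197*p*ν*J*W*g0 - 66*p*ν*J*W^2*g0 - 7*p*ν*J*W^3*g0 - 198*p*ν*J^2*g0 - 207*p*ν*J^2*W*g0 - 68*p*ν*J^2*W^2*g0 - 7*p*ν*J^2*W^3*g0 - 84*p*ν*J^3*g0 - 82*p*ν*J^3*W*g0 - 24*p*ν*J^3*W^2*g0 - 2*p*ν*J^3*W^3*g0 - 12*p*ν*J^4*g0 - 10*p*ν*J^4*W*g0 - 2*p*ν*J^4*W^2*g0 + 12*p*ν^2*g0 + 22*p*ν^2*W*g0 + 12*p*ν^2*W^2*g0 + 2*p*ν^2*W^3*g0 + 18*p*ν^2*J*g0 + 33*p*ν^2*J*W*g0 + 18*p*ν^2*J*W^2*g0 + 3*p*ν^2*J*W^3*g0 + 6*p*ν^2*J^2*g0 + 11*p*ν^2*J^2*W*g0 + 6*p*ν^2*J^2*W^2*g0 + 1*p*ν^2*J^2*W^3*g0 + 36*p^2*ν*g0 + 42*p^2*ν*W*g0 + 16*p^2*ν*W^2*g0 + 2*p^2*ν*W^3*g0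 + 66*p^2*ν*J*g0 + 73*p^2*ν*J*W*g0 + 26*p^2*ν*J*W^2*g0 + 3*p^2*ν*J*W^3*g0 + 36*p^2*ν*J^2*g0 + 36*p^2*ν*J^2*W*g0 + 11*p^2*ν*J^2*W^2*g0 + 1*p^2*ν*J^2*W^3*g0 + 6*p^2*ν*J^3*g0 + 5*p^2*ν*J^3*W*g0 + 1*p^2*ν*J^3*W^2*g0) * hh2 + (24*g0 + 20*W*g0 + 4*W^2*g0 + 6*J*W*g0 + 2*J*W^2*g0 - 66*J^2*g0 - 40*J^2*W*g0 - 6*J^2*W^2*g0 - 36*J^3*g0 - 21*J^3*W*g0 - 3*J^3*W^2*g0 + 21*J^4*g0 + 13*J^4*W*g0 + 2*J^4*W^2*g0 + 18*J^5*g0 + 9*J^5*W*g0 + 1*J^5*W^2*g0 + 3*J^6*g0 + 1*J^6*W*g0 + 12*ν*g0 - 38*ν*W*g0 - 50*ν*W^2*g0 - 18*ν*W^3*g0 - 2*ν*W^4*g0 - 48*ν*J*g0 - 133*ν*J*W*g0 - 105*ν*J*W^2*g0 - 31*ν*J*W^3*g0 - 3*ν*J*W^4*g0 - 123*ν*J^2*g0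 - 155*ν*J^2*W*g0 - 74*ν*J^2*W^2*g0 - 15*ν*J^2*W^3*g0 - 1*ν*J^2*W^4*g0 - 78*ν*J^3*g0 - 71*ν*J^3*W*g0 - 21*ν*J^3*W^2*g0 - 2*ν*J^3*W^3*g0 - 15*ν*J^4*g0 - 11*ν*J^4*W*g0 - 2*ν*J^4*W^2*g0 + 24*ν^2*g0 + 20*ν^2*W*g0 + 4*ν^2*W^2*g0 + 36*ν^2*J*g0 + 30*ν^2*J*W*g0 + 6*ν^2*J*W^2*g0 + 12*ν^2*J^2*g0 + 10*ν^2*J^2*W*g0 + 2*ν^2*J^2*W^2*g0 + 48*q*ν*g0 + 52*q*ν*W*g0 + 18*q*ν*W^2*g0 + 2*q*ν*W^3*g0 + 84*q*ν*J*g0 + 88*q*ν*J*W*g0 + 29*q*ν*J*W^2*g0 + 3*q*ν*J*W^3*g0 + 42*q*ν*J^2*g0 + 41*q*ν*J^2*W*g0 + 12*q*ν*J^2*W^2*g0 + 1*q*ν*J^2*W^3*g0 + 6*q*ν*J^3*g0 + 5*q*ν*J^3*W*g0 + 1*q*ν*J^3*W^2*g0 + 12*q*ν^2*g0 + 10*q*ν^2*W*g0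 + 2*q*ν^2*W^2*g0 + 18*q*ν^2*J*g0 + 15*q*ν^2*J*W*g0 + 3*q*ν^2*J*W^2*g0 + 6*q*ν^2*J^2*g0 + 5*q*ν^2*J^2*W*g0 + 1*q*ν^2*J^2*W^2*g0 + 24*p*g0 + 14*p*W*g0 + 2*p*W^2*g0 + 102*p*J*g0 + 67*p*J*W*g0 + 11*p*J*W^2*g0 + 33*p*J^2*g0 + 20*p*J^2*W*g0 + 3*p*J^2*W^2*g0 - 78*p*J^3*g0 - 47*p*J^3*W*g0 - 7*p*J^3*W^2*g0 - 54*p*J^4*g0 - 27*p*J^4*W*g0 - 3*p*J^4*W^2*g0 - 9*p*J^5*g0 - 3*p*J^5*W*g0 + 54*p*ν*g0 + 102*p*ν*W*g0 + 70*p*ν*W^2*g0 + 20*p*ν*W^3*g0 + 2*p*ν*W^4*g0 + 189*p*ν*J*g0 + 213*p*ν*J*W*g0 + 89*p*ν*J*W^2*g0 + 16*p*ν*J*W^3*g0 + 1*p*ν*J*W^4*g0 + 141*p*ν*J^2*g0 + 125*p*ν*J^2*W*g0 + 35*p*ν*J^2*W^2*g0 + 3*p*ν*J^2*W^3*g0 +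 30*p*ν*J^3*g0 + 22*p*ν*J^3*W*g0 + 4*p*ν*J^3*W^2*g0 - 24*p*ν^2*g0 - 20*p*ν^2*W*g0 - 4*p*ν^2*W^2*g0 - 12*p*ν^2*J*g0 - 10*p*ν^2*J*W*g0 - 2*p*ν^2*J*W^2*g0 - 48*p*q*ν*g0 - 52*p*q*ν*W*g0 - 18*p*q*ν*W^2*g0 - 2*p*q*ν*W^3*g0 - 36*p*q*ν*J*g0 - 36*p*q*ν*J*W*g0 - 11*p*q*ν*J*W^2*g0 - 1*p*q*ν*J*W^3*g0 - 6*p*q*ν*J^2*g0 - 5*p*q*ν*J^2*W*g0 - 1*p*q*ν*J^2*W^2*g0 - 12*p*q*ν^2*g0 - 10*p*q*ν^2*W*g0 - 2*p*q*ν^2*W^2*g0 - 6*p*q*ν^2*J*g0 - 5*p*q*ν^2*J*W*g0 - 1*p*q*ν^2*J*W^2*g0 - 30*p^2*g0 - 22*p^2*W*g0 - 4*p^2*W^2*g0 + 21*p^2*J*g0 + 13*p^2*J*W*g0 + 2*p^2*J*W^2*g0 + 90*p^2*J^2*g0 + 54*p^2*J^2*W*g0 + 8*p^2*J^2*W^2*g0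 + 54*p^2*J^3*g0 + 27*p^2*J^3*W*g0 + 3*p^2*J^3*W^2*g0 + 9*p^2*J^4*g0 + 3*p^2*J^4*W*g0 - 66*p^2*ν*g0 - 64*p^2*ν*W*g0 - 20*p^2*ν*W^2*g0 - 2*p^2*ν*W^3*g0 - 63*p^2*ν*J*g0 - 54*p^2*ν*J*W*g0 - 14*p^2*ν*J*W^2*g0 - 1*p^2*ν*J*W^3*g0 - 15*p^2*ν*J^2*g0 - 11*p^2*ν*J^2*W*g0 - 2*p^2*ν*J^2*W^2*g0 - 18*p^3*g0 - 12*p^3*W*g0 - 2*p^3*W^2*g0 - 33*p^3*J*g0 - 20*p^3*J*W*g0 - 3*p^3*J*W^2*g0 - 18*p^3*J^2*g0 - 9*p^3*J^2*W*g0 - 1*p^3*J^2*W^2*g0 - 3*p^3*J^3*g0 - 1*p^3*J^3*W*g0) * hh1 + (-24*g0*h0 - 32*W*g0*h0 - 14*W^2*g0*h0 - 2*W^3*g0*h0 - 36*J*g0*h0 - 48*J*W*g0*h0 - 21*J*W^2*g0*h0 - 3*J*W^3*g0*h0 - 12*J^2*g0*h0 - 16*J^2*W*g0*h0 - 7*J^2*W^2*g0*h0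 - 1*J^2*W^3*g0*h0 + 12*q*g0*h0 + 10*q*W*g0*h0 + 2*q*W^2*g0*h0 + 18*q*J*g0*h0 + 15*q*J*W*g0*h0 + 3*q*J*W^2*g0*h0 + 6*q*J^2*g0*h0 + 5*q*J^2*W*g0*h0 + 1*q*J^2*W^2*g0*h0 + 24*p*g0*h0 + 32*p*W*g0*h0 + 14*p*W^2*g0*h0 + 2*p*W^3*g0*h0 + 12*p*J*g0*h0 + 16*p*J*W*g0*h0 + 7*p*J*W^2*g0*h0 + 1*p*J*W^3*g0*h0 - 12*p*q*g0*h0 - 10*p*q*W*g0*h0 - 2*p*q*W^2*g0*h0 - 6*p*q*J*g0*h0 - 5*p*q*J*W*g0*h0 - 1*p*q*J*W^2*g0*h0) * hν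
  rcases mul_eq_zero.mp h with h' | h'
  · exact h'
  · exact absurd h' hKne

lemma keyB (p q ν J g1 g2 g3 h0 h1 h2 : ℝ)
    (hJ1 : J + 1 ≠ 0)
    (hJ2 : J + 2 ≠ 0)
    (hν : (q+2)*ν^2 - ((J+3)^2 - (J+3)*(p+q+4) - 1)*ν + p + 2 = 0)
    (hg2 : g2 = g1*(J-p))
    (hg3 : g3*2 = g2*(J-1-p))
    (hh1 : h1*(J+1) = h0*(q-1))
    (hh2 : h2*(J+2) = h1*q) :
    (-2)*(q-1)*((J+2)*g3-(ν+1)*g2)*h0 - (-(1+ν)*(J+1)*J + (p+1-ν*(q-2*(J+1)+1))*(J+1) + (-ν*(J+2)*(J+1-q)+ν*(J+3)+1))*((J+2)*g2-(ν+1)*g1)*h1 + ν*(J+2)*(J+1-p)*((J+2)*g1)*h2 = 0 := by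
  have hKne : ((J+1)*(J+2)) ≠ 0 := mul_ne_zero hJ1 hJ2
  have h : ((-2)*(q-1)*((J+2)*g3-(ν+1)*g2)*h0 - (-(1+ν)*(J+1)*J + (p+1-ν*(q-2*(J+1)+1))*(J+1) + (-ν*(J+2)*(J+1-q)+ν*(J+3)+1))*((J+2)*g2-(ν+1)*g1)*h1 + ν*(J+2)*(J+1-p)*((J+2)*g1)*h2) * ((J+1)*(J+2)) = 0 := by
    linear_combination (4*h0 + 8*J*h0 + 5*J^2*h0 + 1*J^3*h0 - 4*q*h0 - 8*q*J*h0 - 5*q*J^2*h0 - 1*q*J^3*h0) * hg3 + (-8*h1 - 8*h0 - 16*J*h1 - 10*J*h0 - 6*J^2*h1 + 1*J^2*h0 + 6*J^3*h1 + 4*J^3*h0 + 5*J^4*h1 + 1*J^4*h0 + 1*J^5*h1 - 8*ν*h1 - 4*ν*h0 - 16*ν*J*h1 - 6*ν*J*h0 - 10*ν*J^2*h1 - 2*ν*J^2*h0 - 2*ν*J^3*h1 + 8*q*h0 + 10*q*J*h0 - 1*q*J^2*h0 - 4*q*J^3*h0 - 1*q*J^4*h0 - 4*q*ν*h1 + 4*q*ν*h0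 - 8*q*ν*J*h1 + 6*q*ν*J*h0 - 5*q*ν*J^2*h1 + 2*q*ν*J^2*h0 - 1*q*ν*J^3*h1 - 4*p*h1 - 4*p*h0 - 12*p*J*h1 - 8*p*J*h0 - 13*p*J^2*h1 - 5*p*J^2*h0 - 6*p*J^3*h1 - 1*p*J^3*h0 - 1*p*J^4*h1 + 4*p*q*h0 + 8*p*q*J*h0 + 5*p*q*J^2*h0 + 1*p*q*J^3*h0) * hg2 + (4*ν*g1 + 12*ν*J*g1 + 13*ν*J^2*g1 + 6*ν*J^3*g1 + 1*ν*J^4*g1 - 4*p*ν*g1 - 8*p*ν*J*g1 - 5*p*ν*J^2*g1 - 1*p*ν*J^3*g1) * hh2 + (4*g1 - 6*J*g1 - 10*J^2*g1 + 1*J^3*g1 + 4*J^4*g1 + 1*J^5*g1 + 8*ν*g1 - 4*ν*J*g1 - 10*ν*J^2*g1 - 3*ν*J^3*g1 + 4*ν^2*g1 + 2*ν^2*J*g1 + 6*q*ν*g1 + 5*q*ν*J*g1 + 1*q*ν*J^2*g1 + 2*q*ν^2*g1 + 1*q*ν^2*J*g1 + 10*p*g1 + 7*p*J*g1 - 9*p*J^2*g1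 - 9*p*J^3*g1 - 2*p*J^4*g1 + 10*p*ν*g1 + 11*p*ν*J*g1 + 3*p*ν*J^2*g1 + 4*p^2*g1 + 8*p^2*J*g1 + 5*p^2*J^2*g1 + 1*p^2*J^3*g1) * hh1 + (-2*g1*h0 - 1*J*g1*h0 + 2*q*g1*h0 + 1*q*J*g1*h0) * hν
  rcases mul_eq_zero.mp h with h' | h'
  · exact h'
  · exact absurd h' hKne

lemma keyC (p q ν J g2 g3 h0 h1 : ℝ)
    (hJ1 : J + 1 ≠ 0)
    (hg3 : g3 = g2*(J-p-1))
    (hh1 : h1*(J+1) = h0*q) :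
    (-q)*((J+1)*g3-(ν+1)*g2)*h0 - (-(1+ν)*(J+1)*J + (p+1-ν*(q-2*J+1))*(J+1) + (-ν*(J+1)*(J-q)+ν*(J+2)+1))*((J+1)*g2)*h1 = 0 := by
  have hKne : ((J+1)) ≠ 0 := hJ1
  have h : ((-q)*((J+1)*g3-(ν+1)*g2)*h0 - (-(1+ν)*(J+1)*J + (p+1-ν*(q-2*J+1))*(J+1) + (-ν*(J+1)*(J-q)+ν*(J+2)+1))*((J+1)*g2)*h1) * ((J+1)) = 0 := by
    linear_combination (-1*q*h0 - 2*q*J*h0 - 1*q*J^2*h0) * hg3 + (-2*g2 - 2*J*g2 + 1*J^2*g2 + 1*J^3*g2 - 1*ν*g2 - 1*ν*J*g2 - 1*p*g2 - 2*p*J*g2 - 1*p*J^2*g2) * hh1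
  rcases mul_eq_zero.mp h with h' | h'
  · exact h'
  · exact absurd h' hKne

lemma keyE (p q ν W g0 g1 g2 h1 h2 : ℝ)
    (hW1 : W + 1 ≠ 0)
    (hW2 : W + 2 ≠ 0)
    (hν : (q+2)*ν^2 - ((W+3)^2 - (W+3)*(p+q+4) - 1)*ν + p + 2 = 0)
    (hg1 : g1*(W+1) = g0*(-p))
    (hg2 : g2*(W+2) = g1*(-p-1))
    (hh2 : h2 = h1*(q-W-1)) :
    -(-ν*(W+2)*(W+1-q)+ν*(W+3)+1)*((W+2)*g2-(ν+1)*g1)*h1 + (-(ν*p))*((W+2)*g1-(ν+1)*g0)*h2 = 0 := by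
  have hKne : ((W+1)*(W+2)) ≠ 0 := mul_ne_zero hW1 hW2
  have h : (-(-ν*(W+2)*(W+1-q)+ν*(W+3)+1)*((W+2)*g2-(ν+1)*g1)*h1 + (-(ν*p))*((W+2)*g1-(ν+1)*g0)*h2) * ((W+1)*(W+2)) = 0 := by
    linear_combination (-2*h1 - 3*W*h1 - 1*W^2*h1 - 2*ν*h1 + 1*ν*W*h1 + 7*ν*W^2*h1 + 5*ν*W^3*h1 + 1*ν*W^4*h1 - 4*q*ν*h1 - 8*q*ν*W*h1 - 5*q*ν*W^2*h1 - 1*q*ν*W^3*h1) * hg2 + (4*h1 + 2*W*h1 + 6*ν*h1 - 5*ν*W*h1 - 8*ν*W^2*h1 - 2*ν*W^3*h1 + 2*ν^2*h1 - 3*ν^2*W*h1 - 4*ν^2*W^2*h1 - 1*ν^2*W^3*h1 + 8*q*ν*h1 + 8*q*ν*W*h1 + 2*q*ν*W^2*h1 + 4*q*ν^2*h1 + 4*q*ν^2*W*h1 + 1*q*ν^2*W^2*h1 + 2*p*h1 + 1*p*W*h1 - 4*p*ν*h2 + 2*p*ν*h1 - 4*p*ν*W*h2 - 3*p*ν*W*h1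 - 1*p*ν*W^2*h2 - 4*p*ν*W^2*h1 - 1*p*ν*W^3*h1 + 4*p*q*ν*h1 + 4*p*q*ν*W*h1 + 1*p*q*ν*W^2*h1) * hg1 + (2*p*ν*g0 + 3*p*ν*W*g0 + 1*p*ν*W^2*g0 + 2*p*ν^2*g0 + 3*p*ν^2*W*g0 + 1*p*ν^2*W^2*g0 + 4*p^2*ν*g0 + 4*p^2*ν*W*g0 + 1*p^2*ν*W^2*g0) * hh2 + (-2*p*g0*h1 - 1*p*W*g0*h1) * hν
  rcases mul_eq_zero.mp h with h' | h'
  · exact h'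
  · exact absurd h' hKne

lemma keyF (p q ν g1 g2 h1 h2 : ℝ)
    (hν : (q+2)*ν^2 - (4 - 2*(p+q+4) - 1)*ν + p + 2 = 0)
    (hg2 : g2 = g1*(-p-1))
    (hh2 : h2 = h1*q) :
    -(ν*q+2*ν+1)*(g2-(ν+1)*g1)*h1 + (-(ν*p))*g1*h2 = 0 := by
  linear_combination (-1*h1 - 2*ν*h1 - 1*q*ν*h1) * hg2 + (-1*p*ν*g1) * hh2 + (1*g1*h1) * hν


def Gf (s : ℕ) (p : ℝ) (m : ℕ) : ℝ := gchoose ((s:ℝ)-p-1) m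
def Hf (s : ℕ) (q : ℝ) (j : ℕ) : ℝ := gchoose (q-(s:ℝ)-1+(j:ℝ)) j

lemma Gf_succ (s : ℕ) (p : ℝ) (m : ℕ) :
    Gf s p (m+1) * ((m:ℝ)+1) = Gf s p m * ((s:ℝ)-p-1-(m:ℝ)) := gchoose_succ_mul _ m

lemma Hf_succ (s : ℕ) (q : ℝ) (j : ℕ) :
    Hf s q (j+1) * ((j:ℝ)+1) = Hf s q j * (q-(s:ℝ)+(j:ℝ)) := by
  unfold Hf
  have h := gchoose_succ_mul' (q-(s:ℝ)-1+(j:ℝ)) j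
  rw [show q-(s:ℝ)-1+((j+1:ℕ):ℝ) = (q-(s:ℝ)-1+(j:ℝ))+1 by push_cast; ring]
  linear_combination h

lemma coeff_J1 (s : ℕ) (p q : ℝ) (j : ℕ) (hj : j ≤ s+1) :
    ((jacobiP (s+1) (q+p-2*((s:ℝ)+2)+4) (-p-2)).comp (2*X-1)).coeff j
      = (-1:ℝ)^(s+1-j) * (Gf s p (s+1-j) * Hf s q j) := by
  rw [jac_coeff _ _ _ _ hj]
  unfold Gf Hf
  rw [show (-p-2+((s+1:ℕ):ℝ)) = (s:ℝ)-p-1 by push_cast; ring,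
    show (q+p-2*((s:ℝ)+2)+4 + (-p-2) + ((s+1:ℕ):ℝ) + (j:ℝ)) = q-(s:ℝ)-1+(j:ℝ) by push_cast; ring]

lemma coeff_J2 (s : ℕ) (p q : ℝ) (j : ℕ) (hj : j ≤ s) :
    ((jacobiP s (q+p-2*((s:ℝ)+2)+4) (-p-1)).comp (2*X-1)).coeff j
      = (-1:ℝ)^(s-j) * (Gf s p (s-j) * Hf s q j) := by
  rw [jac_coeff _ _ _ _ hj]
  unfold Gf Hf
  rw [show (-p-1+((s:ℕ):ℝ)) = (s:ℝ)-p-1 by push_cast; ring,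
    show (q+p-2*((s:ℝ)+2)+4 + (-p-1) + ((s:ℕ):ℝ) + (j:ℝ)) = q-(s:ℝ)-1+(j:ℝ) by push_cast; ring]

/-- if `ν` solves `(q+2)ν² − (ℓ² − ℓ(p+q+4) − 1)ν + p + 2 = 0`, then
`y₂ = (ℓ−1)·P_{ℓ−1}^{(b,−p−2)}(2u−1) + (ν+1)·P_{ℓ−2}^{(b,−p−1)}(2u−1)` (with
`b = q+p−2ℓ+4`) satisfies the differential equation
`u(u−1)(u−ν)y₂″ + ((u(q−2ℓ+5)+p)(u−ν) + u(1−u))y₂′ + ((ℓ−1)(ℓ−2−q)(u−ν) + νℓ + 1)y₂ = 0`. -/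
theorem stmt14 (ℓ : ℕ) (hℓ : 2 ≤ ℓ) (p q ν : ℝ)
    (hν : (q + 2) * ν ^ 2 - ((ℓ : ℝ) ^ 2 - ℓ * (p + q + 4) - 1) * ν + p + 2 = 0) :
    let b : ℝ := q + p - 2 * ℓ + 4
    let y2 : Polynomial ℝ :=
      Polynomial.C ((ℓ : ℝ) - 1) * (jacobiP (ℓ - 1) b (-p - 2)).comp (2 * Polynomial.X - 1)
        + Polynomial.C (ν + 1) * (jacobiP (ℓ - 2) b (-p - 1)).comp (2 * Polynomial.X - 1)
    Polynomial.X * (Polynomial.X - 1) * (Polynomial.X - Polynomial.C ν)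
        * Polynomial.derivative (Polynomial.derivative y2)
      + ((Polynomial.X * Polynomial.C (q - 2 * (ℓ : ℝ) + 5) + Polynomial.C p)
            * (Polynomial.X - Polynomial.C ν) + Polynomial.X * (1 - Polynomial.X))
          * Polynomial.derivative y2
      + (Polynomial.C (((ℓ : ℝ) - 1) * ((ℓ : ℝ) - 2 - q)) * (Polynomial.X - Polynomial.C ν)
          + Polynomial.C (ν * ℓ + 1)) * y2 = 0 := by
  intro b y2
  obtain ⟨s, rfl⟩ : ∃ s, ℓ = s + 2 := ⟨ℓ - 2, by omega⟩
  have hy2 : y2 = C ((s:ℝ)+1) * (jacobiP (s+1) (q+p-2*((s:ℝ)+2)+4) (-p-2)).comp (2*X-1)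
      + C (ν+1) * (jacobiP s (q+p-2*((s:ℝ)+2)+4) (-p-1)).comp (2*X-1) := by
    have e1 : ((s+2:ℕ):ℝ) - 1 = (s:ℝ)+1 := by push_cast; ring
    have e2 : q+p-2*((s+2:ℕ):ℝ)+4 = q+p-2*((s:ℝ)+2)+4 := by push_cast; ring
    simp only [y2, b, e1, e2, show s+2-1 = s+1 from rfl, show s+2-2 = s from rfl]
  have hν' : (q+2)*ν^2 - (((s:ℝ)+2)^2 - ((s:ℝ)+2)*(p+q+4) - 1)*ν + p + 2 = 0 := by
    push_cast at hν
    linear_combination hν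
  have hcle : ∀ j, j ≤ s → y2.coeff j
      = (-1:ℝ)^(s+1-j) * (((s:ℝ)+1) * Gf s p (s+1-j) - (ν+1) * Gf s p (s-j)) * Hf s q j := by
    intro j hj
    rw [hy2, coeff_add, coeff_C_mul, coeff_C_mul, coeff_J1 s p q j (by omega),
      coeff_J2 s p q j hj, show s+1-j = (s-j)+1 by omega, pow_succ]
    ring
  have hctop : y2.coeff (s+1) = ((s:ℝ)+1) * (Gf s p 0 * Hf s q (s+1)) := by
    rw [hy2, coeff_add, coeff_C_mul, coeff_C_mul, coeff_J1 s p q (s+1) le_rfl,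
      jac_coeff_zero s (q+p-2*((s:ℝ)+2)+4) (-p-1) (s+1) (by omega), Nat.sub_self]
    norm_num
  have hczero : ∀ j, s+2 ≤ j → y2.coeff j = 0 := by
    intro j hj
    rw [hy2, coeff_add, coeff_C_mul, coeff_C_mul,
      jac_coeff_zero (s+1) (q+p-2*((s:ℝ)+2)+4) (-p-2) j (by omega),
      jac_coeff_zero s (q+p-2*((s:ℝ)+2)+4) (-p-1) j (by omega)]
    ring
  have hrec0 : (-ν*((s:ℝ)+1)*((s:ℝ)-q)+ν*((s:ℝ)+2)+1) * y2.coeff 0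
      + (-(ν*p)) * y2.coeff 1 = 0 := by
    rcases Nat.eq_zero_or_pos s with hs | hs
    · subst hs
      have hct := hctop
      norm_num at hct
      rw [hcle 0 (by omega), hct]
      have hE := keyF p q ν (Gf 0 p 0) (Gf 0 p 1) (Hf 0 q 0) (Hf 0 q 1)
        (by have h2 := hν'; push_cast at h2 ⊢; linear_combination h2)
        (by have h2 := Gf_succ 0 p 0; norm_num at h2; push_cast at h2 ⊢; linear_combination h2)
        (by have h2 := Hf_succ 0 q 0; norm_num at h2; push_cast at h2 ⊢; linear_combination h2)
      norm_num
      push_cast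
      linear_combination hE
    · obtain ⟨t, rfl⟩ : ∃ t, s = t+1 := ⟨s-1, by omega⟩
      rw [hcle 0 (by omega), hcle 1 (by omega),
        show t+1+1-0 = t+2 by omega, show t+1-0 = t+1 by omega,
        show t+1+1-1 = t+1 by omega, show t+1-1 = t by omega]
      have hE := keyE p q ν (t:ℝ) (Gf (t+1) p t) (Gf (t+1) p (t+1)) (Gf (t+1) p (t+2))
        (Hf (t+1) q 0) (Hf (t+1) q 1)
        (by positivity) (by positivity)
        (by have h2 := hν'; push_cast at h2 ⊢; linear_combination h2)
        (by have h2 := Gf_succ (t+1) p t; push_cast at h2 ⊢; linear_combination h2)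
        (by have h2 := Gf_succ (t+1) p (t+1); push_cast at h2 ⊢; linear_combination h2)
        (by have h2 := Hf_succ (t+1) q 0; norm_num at h2; push_cast at h2 ⊢; linear_combination h2)
      push_cast
      linear_combination ((-1:ℝ)^(t+1)) * hE
  have hrec : ∀ m : ℕ,
      (((m:ℝ)+1)-((s:ℝ)+2))*(((m:ℝ)+1)+q-((s:ℝ)+2)+1) * y2.coeff m
      + (-(1+ν)*((m:ℝ)+1)*(m:ℝ) + (p+1-ν*(q-2*((s:ℝ)+2)+5))*((m:ℝ)+1)
          + (-ν*((s:ℝ)+1)*((s:ℝ)-q)+ν*((s:ℝ)+2)+1)) * y2.coeff (m+1)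
      + ν*((m:ℝ)+2)*((m:ℝ)+1-p) * y2.coeff (m+2) = 0 := by
    intro m
    rcases (show m+2 ≤ s ∨ m+1 = s ∨ m = s ∨ m = s+1 ∨ s+2 ≤ m by omega)
      with h | h | h | h | h
    · obtain ⟨w, rfl⟩ : ∃ w, s = m+w+2 := ⟨s-m-2, by omega⟩
      rw [hcle m (by omega), hcle (m+1) (by omega), hcle (m+2) (by omega),
        show m+w+2+1-m = w+3 by omega, show m+w+2-m = w+2 by omega,
        show m+w+2+1-(m+1) = w+2 by omega, show m+w+2-(m+1) = w+1 by omega,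
        show m+w+2+1-(m+2) = w+1 by omega, show m+w+2-(m+2) = w by omega]
      have hE := keyA p q ν (m:ℝ) (w:ℝ) (Gf (m+w+2) p w) (Gf (m+w+2) p (w+1))
        (Gf (m+w+2) p (w+2)) (Gf (m+w+2) p (w+3))
        (Hf (m+w+2) q m) (Hf (m+w+2) q (m+1)) (Hf (m+w+2) q (m+2))
        (by positivity) (by positivity) (by positivity) (by positivity) (by positivity)
        (by have h2 := hν'; push_cast at h2 ⊢; linear_combination h2)
        (by have h2 := Gf_succ (m+w+2) p w; push_cast at h2 ⊢; linear_combination h2)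
        (by have h2 := Gf_succ (m+w+2) p (w+1); push_cast at h2 ⊢; linear_combination h2)
        (by have h2 := Gf_succ (m+w+2) p (w+2); push_cast at h2 ⊢; linear_combination h2)
        (by have h2 := Hf_succ (m+w+2) q m; push_cast at h2 ⊢; linear_combination h2)
        (by have h2 := Hf_succ (m+w+2) q (m+1); push_cast at h2 ⊢; linear_combination h2)
      push_cast
      linear_combination ((-1:ℝ)^(w+3)) * hE
    · obtain rfl : s = m+1 := by omega
      have hct := hctop
      rw [show m+1+1 = m+2 by omega] at hct
      rw [hcle m (by omega), hcle (m+1) (by omega), hct,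
        show m+1+1-m = 2 by omega, show m+1-m = 1 by omega,
        show m+1+1-(m+1) = 1 by omega, show m+1-(m+1) = 0 by omega]
      have hE := keyB p q ν (m:ℝ) (Gf (m+1) p 0) (Gf (m+1) p 1) (Gf (m+1) p 2)
        (Hf (m+1) q m) (Hf (m+1) q (m+1)) (Hf (m+1) q (m+2))
        (by positivity) (by positivity)
        (by have h2 := hν'; push_cast at h2 ⊢; linear_combination h2)
        (by have h2 := Gf_succ (m+1) p 0; norm_num at h2; push_cast at h2 ⊢; linear_combination h2)
        (by have h2 := Gf_succ (m+1) p 1; norm_num at h2; push_cast at h2 ⊢; linear_combination h2)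
        (by have h2 := Hf_succ (m+1) q m; push_cast at h2 ⊢; linear_combination h2)
        (by have h2 := Hf_succ (m+1) q (m+1); norm_num at h2; push_cast at h2 ⊢; linear_combination h2)
      push_cast
      linear_combination hE
    · obtain rfl : m = s := by omega
      rw [hcle m le_rfl, hctop, hczero (m+2) (by omega),
        show m+1-m = 1 by omega, show m-m = 0 by omega]
      have hE := keyC p q ν (m:ℝ) (Gf m p 0) (Gf m p 1) (Hf m q m) (Hf m q (m+1))
        (by positivity)
        (by have h2 := Gf_succ m p 0; norm_num at h2; push_cast at h2 ⊢; linear_combination h2)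
        (by have h2 := Hf_succ m q m; push_cast at h2 ⊢; linear_combination h2)
      push_cast
      linear_combination (-1:ℝ) * hE
    · obtain rfl : m = s+1 := h
      rw [hctop, hczero (s+1+1) (by omega), hczero (s+1+2) (by omega)]
      push_cast
      ring
    · rw [hczero m (by omega), hczero (m+1) (by omega), hczero (m+2) (by omega)]
      ring
  have hmain : (derivative (derivative y2)) * X^3
      + C (-1-ν) * (derivative (derivative y2)) * X^2
      + C ν * (derivative (derivative y2)) * X^1
      + C (q-2*((s:ℝ)+2)+4) * (derivative y2) * X^2
      + C (p+1-ν*(q-2*((s:ℝ)+2)+5)) * (derivative y2) * X^1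
      + C (-(p*ν)) * (derivative y2)
      + C (((s:ℝ)+1)*((s:ℝ)-q)) * y2 * X^1
      + C (-ν*((s:ℝ)+1)*((s:ℝ)-q)+ν*((s:ℝ)+2)+1) * y2 = 0 := by
    ext m
    simp only [coeff_add, coeff_mul_X_pow', coeff_C_mul, coeff_derivative, coeff_zero]
    rcases (show m = 0 ∨ m = 1 ∨ m = 2 ∨ 3 ≤ m by omega) with rfl | rfl | rfl | hm
    · norm_num
      have hr := hrec0
      push_cast
      linear_combination hr
    · norm_num
      have hr := hrec 0
      push_cast at hr ⊢
      linear_combination hr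
    · norm_num
      have hr := hrec 1
      push_cast at hr ⊢
      linear_combination hr
    · obtain ⟨k, rfl⟩ : ∃ k, m = k+3 := ⟨m-3, by omega⟩
      simp only [if_pos (show (3:ℕ) ≤ k+3 by omega), if_pos (show (2:ℕ) ≤ k+3 by omega),
        if_pos (show (1:ℕ) ≤ k+3 by omega),
        show k+3-3 = k by omega, show k+3-2 = k+1 by omega, show k+3-1 = k+2 by omega]
      have hr := hrec (k+2)
      push_cast at hr ⊢
      linear_combination hr
  simp only [map_add, map_sub, map_mul, map_neg, map_one, map_ofNat, Nat.cast_add,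
    Nat.cast_ofNat] at hmain ⊢
  linear_combination hmain

end
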